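/- If there exists a (K1, F, Z, S) placement delivery array and K2 is a positive integer with 0 < K2 ≤ K1, then setting d = gcd(K1,K2), h1 = K1/d, h2 = K2/d, there exists a (K1 + K2, h1·F, h1·Z, (h1 + h2)·S) placement delivery array. -/

import Mathlib

open Finset

/-- A `(K, F, Z, S)` placement delivery array: an `F × K` array over `{*} ∪ {0,…,S−1}`
(`none` encodes `*`) with: C1 each column has exactly `Z` stars; C2 every integer occurs;
C3 equal integer entries lie in distinct rows and columns with stars at crossings. -/
def IsPDA {K F S : ℕ} (Z : ℕ) (P : Fin F → Fin K → Option (Fin S)) : Prop :=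
  (∀ k, ((Finset.univ : Finset (Fin F)).filter (fun j => P j k = none)).card = Z) ∧
  (∀ s : Fin S, ∃ j k, P j k = some s) ∧
  (∀ j₁ k₁ j₂ k₂ (s : Fin S), (j₁, k₁) ≠ (j₂, k₂) →
    P j₁ k₁ = some s → P j₂ k₂ = some s →
    j₁ ≠ j₂ ∧ k₁ ≠ k₂ ∧ P j₁ k₂ = none ∧ P j₂ k₁ = none)

/-- Existence of a `(K, F, Z, S)` placement delivery array. -/
def PDAExists (K F Z S : ℕ) : Prop :=
  ∃ P : Fin F → Fin K → Option (Fin S), IsPDA Z P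

/-- auxiliary "window offset" function -/
def pdaW (h1 i c : ℕ) : ℕ := if i ≤ c % h1 then c % h1 - i else c % h1 + h1 - i

/-- which column of the original PDA sits in block-row `i`, column `c`. -/
def pdaB (K1 h1 h2 i c : ℕ) : ℕ :=
  if c < K1 then c else h1 * ((c - K1) / h2) + ((i + (c - K1) % h2) % h1)

/-- which translate of the symbol set is used in block-row `i`, column `c`. -/
def pdaT (K1 h1 h2 i c : ℕ) : ℕ :=
  if c < K1 ∧ pdaW h1 i c < h2 then h1 + pdaW h1 i c else i

lemma pda_mod2 {x n : ℕ} (h : x < 2 * n) : x % n = if x < n then x else x - n := by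
  rcases lt_or_ge x n with h' | h'
  · rw [if_pos h', Nat.mod_eq_of_lt h']
  · rw [if_neg (not_lt.2 h'), Nat.mod_eq_sub_mod h', Nat.mod_eq_of_lt (by omega)]

lemma pdaB_lt {K1 K2 d h1 h2 i c : ℕ} (e1 : K1 = d * h1) (e2 : K2 = d * h2)
    (h2p : 0 < h2) (hle : h2 ≤ h1) (hi : i < h1) (hc : c < K1 + K2) :
    pdaB K1 h1 h2 i c < K1 := by
  have h1p : 0 < h1 := lt_of_lt_of_le h2p hle
  unfold pdaB
  split_ifs with hcK
  · exact hcK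
  · have hck : c - K1 < d * h2 := by rw [← e2]; omega
    have ha : (c - K1) / h2 < d := by rw [Nat.div_lt_iff_lt_mul h2p]; exact hck
    have hv : (i + (c - K1) % h2) % h1 < h1 := Nat.mod_lt _ h1p
    calc h1 * ((c - K1) / h2) + (i + (c - K1) % h2) % h1
        < h1 * ((c - K1) / h2) + h1 := by omega
      _ = h1 * ((c - K1) / h2 + 1) := by ring
      _ ≤ h1 * d := Nat.mul_le_mul_left _ (by omega)
      _ = K1 := by rw [e1, mul_comm]

lemma pdaT_lt {K1 h1 h2 i c : ℕ} (hi : i < h1) : pdaT K1 h1 h2 i c < h1 + h2 := by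
  unfold pdaT
  split_ifs with h
  · omega
  · omega

lemma pda_cross {K1 h1 h2 i1 c1 i2 c2 : ℕ} (hi1 : i1 < h1) (hi2 : i2 < h1)
    (ht : pdaT K1 h1 h2 i1 c1 = pdaT K1 h1 h2 i2 c2) :
    pdaB K1 h1 h2 i1 c2 = pdaB K1 h1 h2 i2 c2 := by
  unfold pdaT at ht
  by_cases A1 : c1 < K1 ∧ pdaW h1 i1 c1 < h2 <;>
    by_cases A2 : c2 < K1 ∧ pdaW h1 i2 c2 < h2
  · unfold pdaB; rw [if_pos A2.1, if_pos A2.1]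
  · rw [if_pos A1, if_neg A2] at ht; omega
  · rw [if_neg A1, if_pos A2] at ht; omega
  · rw [if_neg A1, if_neg A2] at ht; rw [ht]

lemma pda_inj {K1 K2 d h1 h2 : ℕ} (e1 : K1 = d * h1) (e2 : K2 = d * h2)
    (h2p : 0 < h2) (hle : h2 ≤ h1) {i1 c1 i2 c2 : ℕ}
    (hi1 : i1 < h1) (hi2 : i2 < h1) (hc1 : c1 < K1 + K2) (hc2 : c2 < K1 + K2)
    (ht : pdaT K1 h1 h2 i1 c1 = pdaT K1 h1 h2 i2 c2)
    (hb : pdaB K1 h1 h2 i1 c1 = pdaB K1 h1 h2 i2 c2) :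
    i1 = i2 ∧ c1 = c2 := by
  have h1p : 0 < h1 := lt_of_lt_of_le h2p hle
  unfold pdaT at ht
  unfold pdaB at hb
  by_cases A1 : c1 < K1 ∧ pdaW h1 i1 c1 < h2 <;>
    by_cases A2 : c2 < K1 ∧ pdaW h1 i2 c2 < h2
  · rw [if_pos A1, if_pos A2] at ht
    rw [if_pos A1.1, if_pos A2.1] at hb
    subst hb
    refine ⟨?_, rfl⟩
    unfold pdaW at ht
    have hm := Nat.mod_lt c1 h1p
    split_ifs at ht <;> omega
  · rw [if_pos A1, if_neg A2] at ht; omega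
  · rw [if_neg A1, if_pos A2] at ht; omega
  · rw [if_neg A1, if_neg A2] at ht
    subst ht
    refine ⟨rfl, ?_⟩
    by_cases B1 : c1 < K1 <;> by_cases B2 : c2 < K1
    · rw [if_pos B1, if_pos B2] at hb; exact hb
    · -- c1 < K1, c2 ≥ K1 : contradiction
      exfalso
      rw [if_pos B1, if_neg B2] at hb
      have hW1 : ¬ pdaW h1 i1 c1 < h2 := fun hw => A1 ⟨B1, hw⟩
      have hrlt : (c2 - K1) % h2 < h2 := Nat.mod_lt _ h2p
      have hv : (i1 + (c2 - K1) % h2) % h1 =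
          if i1 + (c2 - K1) % h2 < h1 then i1 + (c2 - K1) % h2
          else i1 + (c2 - K1) % h2 - h1 := pda_mod2 (by omega)
      have hmod : c1 % h1 = (i1 + (c2 - K1) % h2) % h1 := by
        rw [hb, Nat.mul_add_mod, Nat.mod_eq_of_lt (Nat.mod_lt _ h1p)]
      apply hW1
      unfold pdaW
      split_ifs at hv ⊢ <;> omega
    · -- c1 ≥ K1, c2 < K1 : contradiction
      exfalso
      rw [if_neg B1, if_pos B2] at hb
      have hW2 : ¬ pdaW h1 i1 c2 < h2 := fun hw => A2 ⟨B2, hw⟩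
      have hrlt : (c1 - K1) % h2 < h2 := Nat.mod_lt _ h2p
      have hv : (i1 + (c1 - K1) % h2) % h1 =
          if i1 + (c1 - K1) % h2 < h1 then i1 + (c1 - K1) % h2
          else i1 + (c1 - K1) % h2 - h1 := pda_mod2 (by omega)
      have hmod : c2 % h1 = (i1 + (c1 - K1) % h2) % h1 := by
        rw [← hb, Nat.mul_add_mod, Nat.mod_eq_of_lt (Nat.mod_lt _ h1p)]
      apply hW2
      unfold pdaW
      split_ifs at hv ⊢ <;> omega
    · rw [if_neg B1, if_neg B2] at hb
      have hr1 : (c1 - K1) % h2 < h2 := Nat.mod_lt _ h2p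
      have hr2 : (c2 - K1) % h2 < h2 := Nat.mod_lt _ h2p
      have hv1 : (i1 + (c1 - K1) % h2) % h1 =
          if i1 + (c1 - K1) % h2 < h1 then i1 + (c1 - K1) % h2
          else i1 + (c1 - K1) % h2 - h1 := pda_mod2 (by omega)
      have hv2 : (i1 + (c2 - K1) % h2) % h1 =
          if i1 + (c2 - K1) % h2 < h1 then i1 + (c2 - K1) % h2
          else i1 + (c2 - K1) % h2 - h1 := pda_mod2 (by omega)
      have ha : (c1 - K1) / h2 = (c2 - K1) / h2 := by
        have h' := congrArg (· / h1) hb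
        simpa [Nat.mul_add_div h1p, Nat.div_eq_of_lt (Nat.mod_lt (i1 + (c1 - K1) % h2) h1p),
          Nat.div_eq_of_lt (Nat.mod_lt (i1 + (c2 - K1) % h2) h1p)] using h'
      rw [ha] at hb
      have hveq : (i1 + (c1 - K1) % h2) % h1 = (i1 + (c2 - K1) % h2) % h1 := by omega
      have hre : (c1 - K1) % h2 = (c2 - K1) % h2 := by
        split_ifs at hv1 hv2 <;> omega
      have k1 : h2 * ((c2 - K1) / h2) + (c1 - K1) % h2 = c1 - K1 := by
        rw [← ha]; exact Nat.div_add_mod _ _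
      have k2 : h2 * ((c2 - K1) / h2) + (c2 - K1) % h2 = c2 - K1 := Nat.div_add_mod _ _
      omega

lemma pda_surj {K1 K2 d h1 h2 : ℕ} (e1 : K1 = d * h1) (e2 : K2 = d * h2)
    (h2p : 0 < h2) (hle : h2 ≤ h1) {t b : ℕ} (ht : t < h1 + h2) (hb : b < K1) :
    ∃ i, i < h1 ∧ ∃ c, c < K1 + K2 ∧ pdaT K1 h1 h2 i c = t ∧ pdaB K1 h1 h2 i c = b := by
  have h1p : 0 < h1 := lt_of_lt_of_le h2p hle
  have hbm := Nat.mod_lt b h1p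
  by_cases htt : t < h1
  · by_cases hw : pdaW h1 t b < h2
    · refine ⟨t, htt, K1 + (h2 * (b / h1) + pdaW h1 t b), ?_, ?_, ?_⟩
      · have hq : b / h1 < d := by
          rw [Nat.div_lt_iff_lt_mul h1p, ← e1]; exact hb
        have hlt : h2 * (b / h1) + pdaW h1 t b < h2 * d := by
          calc h2 * (b / h1) + pdaW h1 t b < h2 * (b / h1) + h2 := by omega
            _ = h2 * (b / h1 + 1) := by ring
            _ ≤ h2 * d := Nat.mul_le_mul_left _ (by omega)
        have e2' : K2 = h2 * d := by rw [e2, mul_comm]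
        omega
      · unfold pdaT
        rw [if_neg (by rintro ⟨h', -⟩; omega)]
      · unfold pdaB
        rw [if_neg (by omega), Nat.add_sub_cancel_left, Nat.mul_add_div h2p,
          Nat.mul_add_mod, Nat.div_eq_of_lt hw, add_zero, Nat.mod_eq_of_lt hw]
        have h2' : t + pdaW h1 t b < 2 * h1 := by unfold pdaW; split_ifs <;> omega
        have hW : (t + pdaW h1 t b) % h1 = b % h1 := by
          rw [pda_mod2 h2']; unfold pdaW; split_ifs <;> omega
        rw [hW]
        exact Nat.div_add_mod b h1
    · refine ⟨t, htt, b, by omega, ?_, ?_⟩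
      · unfold pdaT; rw [if_neg (fun hcon => hw hcon.2)]
      · unfold pdaB; rw [if_pos hb]
  · have hwlt : t - h1 < h2 := by omega
    refine ⟨if t - h1 ≤ b % h1 then b % h1 - (t - h1) else b % h1 + h1 - (t - h1),
      by split_ifs <;> omega, b, by omega, ?_, ?_⟩
    · have hW : pdaW h1 (if t - h1 ≤ b % h1 then b % h1 - (t - h1)
          else b % h1 + h1 - (t - h1)) b = t - h1 := by
        unfold pdaW; split_ifs <;> omega
      unfold pdaT
      rw [if_pos ⟨hb, by rw [hW]; exact hwlt⟩, hW]
      omega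
    · unfold pdaB; rw [if_pos hb]

theorem recursive_general (K1 K2 F Z S d h1 h2 : ℕ) (hK2 : 0 < K2) (hK2le : K2 ≤ K1)
    (hd : d = Nat.gcd K1 K2) (hh1 : h1 = K1 / d) (hh2 : h2 = K2 / d)
    (h : PDAExists K1 F Z S) :
    PDAExists (K1 + K2) (h1 * F) (h1 * Z) ((h1 + h2) * S) := by
  obtain ⟨P, hC1, hC2, hC3⟩ := h
  have hK1 : 0 < K1 := lt_of_lt_of_le hK2 hK2le
  subst hd
  have hdp : 0 < Nat.gcd K1 K2 := Nat.gcd_pos_of_pos_right _ hK2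
  have e1 : K1 = Nat.gcd K1 K2 * h1 := by
    rw [hh1]; exact (Nat.mul_div_cancel' (Nat.gcd_dvd_left K1 K2)).symm
  have e2 : K2 = Nat.gcd K1 K2 * h2 := by
    rw [hh2]; exact (Nat.mul_div_cancel' (Nat.gcd_dvd_right K1 K2)).symm
  have h2p : 0 < h2 := by
    rw [hh2]; exact Nat.div_pos (Nat.le_of_dvd hK2 (Nat.gcd_dvd_right K1 K2)) hdp
  have hle : h2 ≤ h1 := by rw [hh1, hh2]; exact Nat.div_le_div_right hK2le
  have h1p : 0 < h1 := lt_of_lt_of_le h2p hle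
  have hrow : ∀ ρ : Fin (h1 * F), ρ.val % F < F := by
    intro ρ
    rcases Nat.eq_zero_or_pos F with hF | hF
    · exact absurd ρ.isLt (by simp [hF])
    · exact Nat.mod_lt _ hF
  have hdivlt : ∀ ρ : Fin (h1 * F), ρ.val / F < h1 := by
    intro ρ
    have hF : 0 < F := by
      rcases Nat.eq_zero_or_pos F with hF | hF
      · exact absurd ρ.isLt (by simp [hF])
      · exact hF
    exact (Nat.div_lt_iff_lt_mul hF).2 ρ.isLt
  have hsym : ∀ t s : ℕ, t < h1 + h2 → s < S → t * S + s < (h1 + h2) * S := by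
    intro t s ht hs
    calc t * S + s < t * S + S := by omega
      _ = (t + 1) * S := by ring
      _ ≤ (h1 + h2) * S := Nat.mul_le_mul_right _ (by omega)
  refine ⟨fun ρ κ =>
    (P ⟨ρ.val % F, hrow ρ⟩
      ⟨pdaB K1 h1 h2 (ρ.val / F) κ.val, pdaB_lt e1 e2 h2p hle (hdivlt ρ) κ.isLt⟩).map
      (fun s => ⟨pdaT K1 h1 h2 (ρ.val / F) κ.val * S + s.val,
        hsym _ _ (pdaT_lt (hdivlt ρ)) s.isLt⟩), ?_, ?_, ?_⟩
  · -- C1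
    intro κ
    simp only [Option.map_eq_none_iff]
    rw [Finset.card_filter]
    rw [← Equiv.sum_comp (finProdFinEquiv : Fin h1 × Fin F ≃ Fin (h1 * F))]
    rw [Fintype.sum_prod_type]
    have hpt : ∀ (i : Fin h1) (j : Fin F),
        (if P ⟨((finProdFinEquiv (i, j) : Fin (h1 * F)) : ℕ) % F, hrow _⟩
            ⟨pdaB K1 h1 h2 (((finProdFinEquiv (i, j) : Fin (h1 * F)) : ℕ) / F) κ.val,
              pdaB_lt e1 e2 h2p hle (hdivlt _) κ.isLt⟩ = none then 1 else 0) =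
        (if P j ⟨pdaB K1 h1 h2 i.val κ.val,
              pdaB_lt e1 e2 h2p hle i.isLt κ.isLt⟩ = none then 1 else 0) := by
      intro i j
      have hF : 0 < F := lt_of_le_of_lt (Nat.zero_le _) j.isLt
      have hv : ((finProdFinEquiv (i, j) : Fin (h1 * F)) : ℕ) = j.val + F * i.val :=
        finProdFinEquiv_apply_val (i, j)
      have hm : ((finProdFinEquiv (i, j) : Fin (h1 * F)) : ℕ) % F = j.val := by
        rw [hv, Nat.add_mul_mod_self_left, Nat.mod_eq_of_lt j.isLt]
      have hdv : ((finProdFinEquiv (i, j) : Fin (h1 * F)) : ℕ) / F = i.val := by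
        rw [hv, Nat.add_mul_div_left _ _ hF, Nat.div_eq_of_lt j.isLt, zero_add]
      congr 1
      · simp only [hm, hdv, Fin.eta]
    rw [Finset.sum_congr rfl (fun i _ => Finset.sum_congr rfl (fun j _ => hpt i j))]
    have hinner : ∀ i : Fin h1,
        (∑ j : Fin F, if P j ⟨pdaB K1 h1 h2 i.val κ.val,
            pdaB_lt e1 e2 h2p hle i.isLt κ.isLt⟩ = none then 1 else 0) = Z := by
      intro i
      rw [← Finset.card_filter]
      exact hC1 _
    rw [Finset.sum_congr rfl (fun i _ => hinner i)]
    simp [Finset.sum_const, Finset.card_univ, mul_comm]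
  · -- C2
    intro σ
    have hS : 0 < S := by
      rcases Nat.eq_zero_or_pos S with hS | hS
      · exact absurd σ.isLt (by simp [hS])
      · exact hS
    have ht : σ.val / S < h1 + h2 := (Nat.div_lt_iff_lt_mul hS).2 σ.isLt
    have hs : σ.val % S < S := Nat.mod_lt _ hS
    obtain ⟨j, b, hPb⟩ := hC2 ⟨σ.val % S, hs⟩
    obtain ⟨i, hi, c, hc, hT, hB⟩ := pda_surj e1 e2 h2p hle ht b.isLt
    have hρ : j.val + F * i < h1 * F := by
      have hF : 0 < F := lt_of_le_of_lt (Nat.zero_le _) j.isLt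
      calc j.val + F * i < F + F * i := by omega
        _ = F * (i + 1) := by ring
        _ ≤ F * h1 := Nat.mul_le_mul_left _ (by omega)
        _ = h1 * F := mul_comm _ _
    refine ⟨⟨j.val + F * i, hρ⟩, ⟨c, hc⟩, ?_⟩
    have hm : (j.val + F * i) % F = j.val := by
      rw [Nat.add_mul_mod_self_left, Nat.mod_eq_of_lt j.isLt]
    have hF : 0 < F := lt_of_le_of_lt (Nat.zero_le _) j.isLt
    have hdv : (j.val + F * i) / F = i := by
      rw [Nat.add_mul_div_left _ _ hF, Nat.div_eq_of_lt j.isLt, zero_add]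
    simp only [hm, hdv, Fin.eta]
    have hbfin : (⟨pdaB K1 h1 h2 i c, pdaB_lt e1 e2 h2p hle hi hc⟩ : Fin K1) = b :=
      Fin.ext hB
    rw [show (⟨pdaB K1 h1 h2 i c, _⟩ : Fin K1) = b from Fin.ext hB]
    rw [hPb]
    simp only [Option.map_some]
    congr 1
    apply Fin.ext
    simp only []
    rw [hT]
    show σ.val / S * S + σ.val % S = σ.val
    rw [mul_comm]
    exact Nat.div_add_mod σ.val S
  · -- C3
    intro ρ1 κ1 ρ2 κ2 σ hne hQ1 hQ2
    obtain ⟨s1, hP1, hf1⟩ := Option.map_eq_some_iff.1 hQ1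
    obtain ⟨s2, hP2, hf2⟩ := Option.map_eq_some_iff.1 hQ2
    have hS : 0 < S := s1.pos
    have hv1 : pdaT K1 h1 h2 (ρ1.val / F) κ1.val * S + s1.val = σ.val :=
      congrArg Fin.val hf1
    have hv2 : pdaT K1 h1 h2 (ρ2.val / F) κ2.val * S + s2.val = σ.val :=
      congrArg Fin.val hf2
    have htt : pdaT K1 h1 h2 (ρ1.val / F) κ1.val = pdaT K1 h1 h2 (ρ2.val / F) κ2.val := by
      have d1 : (pdaT K1 h1 h2 (ρ1.val / F) κ1.val * S + s1.val) / S =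
          pdaT K1 h1 h2 (ρ1.val / F) κ1.val := by
        rw [mul_comm, Nat.mul_add_div hS, Nat.div_eq_of_lt s1.isLt, add_zero]
      have d2 : (pdaT K1 h1 h2 (ρ2.val / F) κ2.val * S + s2.val) / S =
          pdaT K1 h1 h2 (ρ2.val / F) κ2.val := by
        rw [mul_comm, Nat.mul_add_div hS, Nat.div_eq_of_lt s2.isLt, add_zero]
      rw [← d1, ← d2, hv1, hv2]
    have hss : s1 = s2 := by
      apply Fin.ext
      rw [htt] at hv1
      omega
    by_cases hbb : ((⟨ρ1.val % F, hrow ρ1⟩ : Fin F),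
        (⟨pdaB K1 h1 h2 (ρ1.val / F) κ1.val,
          pdaB_lt e1 e2 h2p hle (hdivlt ρ1) κ1.isLt⟩ : Fin K1)) =
        ((⟨ρ2.val % F, hrow ρ2⟩ : Fin F),
        (⟨pdaB K1 h1 h2 (ρ2.val / F) κ2.val,
          pdaB_lt e1 e2 h2p hle (hdivlt ρ2) κ2.isLt⟩ : Fin K1))
    · exfalso
      have hj : ρ1.val % F = ρ2.val % F := congrArg Fin.val (congrArg Prod.fst hbb)
      have hbe : pdaB K1 h1 h2 (ρ1.val / F) κ1.val = pdaB K1 h1 h2 (ρ2.val / F) κ2.val :=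
        congrArg Fin.val (congrArg Prod.snd hbb)
      obtain ⟨hie, hce⟩ := pda_inj e1 e2 h2p hle (hdivlt ρ1) (hdivlt ρ2)
        κ1.isLt κ2.isLt htt hbe
      apply hne
      have hρe : ρ1 = ρ2 := by
        apply Fin.ext
        have q1 := Nat.div_add_mod ρ1.val F
        have q2 := Nat.div_add_mod ρ2.val F
        rw [hie] at q1
        omega
      have hκe : κ1 = κ2 := Fin.ext hce
      rw [hρe, hκe]
    · obtain ⟨hj, hk, hx1, hx2⟩ := hC3 _ _ _ _ s1 hbb hP1 (hss ▸ hP2)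
      refine ⟨?_, ?_, ?_, ?_⟩
      · intro hEq
        apply hj
        apply Fin.ext
        show ρ1.val % F = ρ2.val % F
        rw [hEq]
      · intro hEq
        apply hk
        apply Fin.ext
        show pdaB K1 h1 h2 (ρ1.val / F) κ1.val = pdaB K1 h1 h2 (ρ2.val / F) κ2.val
        have hce : κ1.val = κ2.val := congrArg Fin.val hEq
        rw [hce] at htt ⊢
        exact pda_cross (hdivlt ρ1) (hdivlt ρ2) htt
      · rw [Option.map_eq_none_iff]
        have hcr : pdaB K1 h1 h2 (ρ1.val / F) κ2.val = pdaB K1 h1 h2 (ρ2.val / F) κ2.val :=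
          pda_cross (hdivlt ρ1) (hdivlt ρ2) htt
        rw [show (⟨pdaB K1 h1 h2 (ρ1.val / F) κ2.val, pdaB_lt e1 e2 h2p hle (hdivlt ρ1) κ2.isLt⟩ : Fin K1)
          = ⟨pdaB K1 h1 h2 (ρ2.val / F) κ2.val, pdaB_lt e1 e2 h2p hle (hdivlt ρ2) κ2.isLt⟩ from Fin.ext hcr]
        exact hx1
      · rw [Option.map_eq_none_iff]
        have hcr : pdaB K1 h1 h2 (ρ2.val / F) κ1.val = pdaB K1 h1 h2 (ρ1.val / F) κ1.val :=
          pda_cross (hdivlt ρ2) (hdivlt ρ1) htt.symm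
        rw [show (⟨pdaB K1 h1 h2 (ρ2.val / F) κ1.val, pdaB_lt e1 e2 h2p hle (hdivlt ρ2) κ1.isLt⟩ : Fin K1)
          = ⟨pdaB K1 h1 h2 (ρ1.val / F) κ1.val, pdaB_lt e1 e2 h2p hle (hdivlt ρ1) κ1.isLt⟩ from Fin.ext hcr]
        exact hx2
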